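/- CDF of the ESN distribution: if Y ∼ ESN_p(μ, Σ, λ, τ), then for any y ∈ ℝ^p, P(Y ≤ y) = ξ^{-1} Φ_{p+1}((yᵀ, τ̃)ᵀ; μ*, Ω), where τ̃ = τ/√(1+λᵀλ), μ* = (μᵀ, 0)ᵀ, ξ = Φ(τ̃), and Ω is the block matrix [Σ, -Δ; -Δᵀ, 1] with Δ = Σ^{1/2} λ / √(1+λᵀλ). -/

import Mathlib

open MeasureTheory Real Matrix Filter

/-- Standard normal cdf Φ. -/
noncomputable def stdCDF (t : ℝ) : ℝ :=
  ∫ x in Set.Iic t, ProbabilityTheory.gaussianPDFReal 0 1 x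

/-- Univariate normal density with mean `m` and variance `v`. -/
noncomputable def normPDF (m v x : ℝ) : ℝ :=
  (Real.sqrt (2 * π * v))⁻¹ * Real.exp (-((x - m) ^ 2 / (2 * v)))

/-- Multivariate normal density with mean `μ` and covariance `S`. -/
noncomputable def mvnPDF {n : Type*} [Fintype n] [DecidableEq n] (μ : n → ℝ) (S : Matrix n n ℝ)
    (x : n → ℝ) : ℝ :=
  (2 * π) ^ (-(Fintype.card n : ℝ) / 2) * S.det ^ (-(1 : ℝ) / 2) *
    Real.exp (-(dotProduct (x - μ) (S⁻¹ *ᵥ (x - μ))) / 2)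

/-- The positive semidefinite square root of a positive semidefinite matrix
(the definition `Matrix.PosSemidef.sqrt` of the older Mathlib, since removed). -/
noncomputable def posSemidefSqrt {n : Type*} [Fintype n] [DecidableEq n]
    {A : Matrix n n ℝ} (hA : A.PosSemidef) : Matrix n n ℝ :=
  (hA.1.eigenvectorUnitary : Matrix n n ℝ) * diagonal ((√·) ∘ hA.1.eigenvalues) *
    (star hA.1.eigenvectorUnitary : Matrix n n ℝ)

/-- Extended skew-normal density. -/
noncomputable def esnPDF {n : Type*} [Fintype n] [DecidableEq n] (μ : n → ℝ)
    (S : Matrix n n ℝ) (hS : S.PosDef) (l : n → ℝ) (τ : ℝ) (y : n → ℝ) : ℝ :=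
  (stdCDF (τ / Real.sqrt (1 + dotProduct l l)))⁻¹ * mvnPDF μ S y *
    stdCDF (τ + dotProduct l ((posSemidefSqrt hS.posSemidef)⁻¹ *ᵥ (y - μ)))


/-! The bordered matrix `Ω = [[Σ, -Δ], [-Δᵀ, 1]]` has Schur complement `k = 1 - Δᵀ Σ⁻¹ Δ`, so its
normal density at `(x, s)` factors as `φ_p(x; μ, Σ)` times the univariate normal density of `s`
with mean `-Δᵀ Σ⁻¹ (x - μ)` and variance `k`. By Tonelli, integrating `s` over `(-∞, τ̃]` leaves
`φ_p(x; μ, Σ) Φ((τ̃ + Δᵀ Σ⁻¹ (x - μ)) / √k)`. For `Δ = Σ^{1/2} λ / √(1 + λᵀλ)` one gets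
`k = 1 / (1 + λᵀλ)` and `Δᵀ Σ⁻¹ = λᵀ Σ^{-1/2} / √(1 + λᵀλ)`, so the argument of `Φ` is exactly
`τ + λᵀ Σ^{-1/2} (x - μ)`, the skewing factor of the ESN density. -/

open scoped ENNReal

section PosSemidefSqrt

variable {n : Type*} [Fintype n] [DecidableEq n] {A : Matrix n n ℝ}

theorem posSemidefSqrt_eq_cfc (hA : A.PosSemidef) : posSemidefSqrt hA = cfc Real.sqrt A := by
  rw [hA.1.cfc_eq, IsHermitian.cfc, Unitary.conjStarAlgAut_apply]
  rfl

theorem posSemidefSqrt_mul_self (hA : A.PosSemidef) :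
    posSemidefSqrt hA * posSemidefSqrt hA = A := by
  rw [posSemidefSqrt_eq_cfc, ← cfc_mul Real.sqrt Real.sqrt A]
  conv_rhs => rw [← cfc_id' ℝ A hA.1]
  exact cfc_congr fun x hx => Real.mul_self_sqrt
    ((posSemidef_iff_isHermitian_and_spectrum_nonneg.1 hA).2 hx)

theorem transpose_posSemidefSqrt (hA : A.PosSemidef) :
    (posSemidefSqrt hA)ᵀ = posSemidefSqrt hA := by
  rw [posSemidefSqrt_eq_cfc]
  exact IsSymm.eq (cfc_predicate Real.sqrt A)

end PosSemidefSqrt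

theorem one_add_dotProduct_self_pos {n : Type*} [Fintype n] (l : n → ℝ) : 0 < 1 + l ⬝ᵥ l :=
  add_pos_of_pos_of_nonneg one_pos (dotProduct_star_self_nonneg l)

theorem mulVec_dotProduct_inv_mul_self_mulVec {α n : Type*} [CommRing α] [Fintype n]
    [DecidableEq n] {R : Matrix n n α} (hR : R.IsSymm) (hdet : IsUnit R.det) (v u : n → α) :
    (R *ᵥ v) ⬝ᵥ (R * R)⁻¹ *ᵥ u = v ⬝ᵥ R⁻¹ *ᵥ u := by
  rw [← vecMul_transpose, hR.eq, ← dotProduct_mulVec, Matrix.mul_inv_rev, ← mulVec_mulVec,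
    mulVec_mulVec _ R, mul_nonsing_inv _ hdet, one_mulVec]

section Gaussian

open ProbabilityTheory
open scoped NNReal

theorem stdCDF_nonneg (t : ℝ) : 0 ≤ stdCDF t :=
  setIntegral_nonneg measurableSet_Iic fun x _ => gaussianPDFReal_nonneg 0 1 x

theorem monotone_stdCDF : Monotone stdCDF := fun _ _ hst =>
  setIntegral_mono_set (integrable_gaussianPDFReal 0 1).integrableOn
    (.of_forall (gaussianPDFReal_nonneg 0 1)) (.of_forall (Set.Iic_subset_Iic.2 hst))

@[fun_prop]
theorem measurable_stdCDF : Measurable stdCDF :=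
  monotone_stdCDF.measurable

theorem ofReal_stdCDF (t : ℝ) : ENNReal.ofReal (stdCDF t) = gaussianReal 0 1 (Set.Iic t) :=
  (gaussianReal_apply_eq_integral 0 one_ne_zero _).symm

theorem normPDF_eq_gaussianPDFReal (m : ℝ) (v : ℝ≥0) : normPDF m v = gaussianPDFReal m v := by
  ext x
  simp only [normPDF, gaussianPDFReal, neg_div]

theorem lintegral_Iic_normPDF (m : ℝ) {v : ℝ} (hv : 0 < v) (b : ℝ) :
    ∫⁻ x in Set.Iic b, ENNReal.ofReal (normPDF m v x) =
      ENNReal.ofReal (stdCDF ((b - m) / √v)) := by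
  lift v to ℝ≥0 using hv.le
  have hv₀ : v ≠ 0 := by exact_mod_cast hv.ne'
  have hσ : 0 < √(v : ℝ) := Real.sqrt_pos.2 hv
  have hstd : (gaussianReal 0 1).map (fun x => √(v : ℝ) * x + m) = gaussianReal m v := by
    change Measure.map ((· + m) ∘ (√(v : ℝ) * ·)) _ = _
    rw [← Measure.map_map (by fun_prop) (by fun_prop), gaussianReal_map_const_mul,
      gaussianReal_map_add_const]
    congr
    · simp
    · ext; simp
  have hpre : (fun x => √(v : ℝ) * x + m) ⁻¹' Set.Iic b = Set.Iic ((b - m) / √v) := by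
    ext x
    simp [le_div_iff₀ hσ, le_sub_iff_add_le, mul_comm]
  rw [normPDF_eq_gaussianPDFReal]
  change ∫⁻ x in _, gaussianPDF m v x = _
  rw [← gaussianReal_apply m hv₀, ← hstd, Measure.map_apply (by fun_prop) measurableSet_Iic, hpre,
    ofReal_stdCDF]

end Gaussian

section MvnPDF

variable {n : Type*} [Fintype n] [DecidableEq n]

@[fun_prop]
theorem continuous_mvnPDF (μ : n → ℝ) (S : Matrix n n ℝ) : Continuous (mvnPDF μ S) := by
  unfold mvnPDF
  fun_prop

theorem mvnPDF_nonneg {μ : n → ℝ} {S : Matrix n n ℝ} (hS : 0 ≤ S.det) (x : n → ℝ) :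
    0 ≤ mvnPDF μ S x := by
  unfold mvnPDF
  have := Real.rpow_nonneg hS (-(1 : ℝ) / 2)
  positivity

end MvnPDF

theorem setLIntegral_Iic_sumElim {ι ι' : Type*} [Fintype ι] [Fintype ι']
    {f : (ι ⊕ ι' → ℝ) → ℝ≥0∞} (hf : Measurable f) (a : ι → ℝ) (b : ι' → ℝ) :
    ∫⁻ z in Set.Iic (Sum.elim a b), f z =
      ∫⁻ x in Set.Iic a, ∫⁻ w in Set.Iic b, f (Sum.elim x w) := by
  have he := volume_measurePreserving_sumPiEquivProdPi_symm fun _ : ι ⊕ ι' => ℝ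
  have hpre : (MeasurableEquiv.sumPiEquivProdPi fun _ : ι ⊕ ι' => ℝ).symm ⁻¹'
      Set.Iic (Sum.elim a b) = Set.Iic a ×ˢ Set.Iic b := by
    ext ⟨x, w⟩
    simp [MeasurableEquiv.coe_sumPiEquivProdPi_symm, Pi.le_def]
  rw [← he.setLIntegral_comp_preimage measurableSet_Iic hf, hpre, Measure.volume_eq_prod,
    ← Measure.prod_restrict,
    lintegral_prod (fun q => f ((MeasurableEquiv.sumPiEquivProdPi _).symm q))
      (hf.comp he.measurable).aemeasurable]
  rfl

theorem setLIntegral_Iic_const_unit {f : (Unit → ℝ) → ℝ≥0∞} (hf : Measurable f) (t : ℝ) :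
    ∫⁻ w in Set.Iic (fun _ => t), f w = ∫⁻ s in Set.Iic t, f (fun _ => s) := by
  have he := volume_preserving_funUnique Unit ℝ
  have hpre : (MeasurableEquiv.funUnique Unit ℝ).symm ⁻¹' Set.Iic (fun _ => t) = Set.Iic t := by
    ext
    simp [Pi.le_def]
  rw [← he.symm.setLIntegral_comp_preimage measurableSet_Iic hf, hpre]
  rfl

section Bordered

variable {n : Type*} [Fintype n] [DecidableEq n]

def borderedMatrix (S : Matrix n n ℝ) (Δ : n → ℝ) : Matrix (n ⊕ Unit) (n ⊕ Unit) ℝ :=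
  fromBlocks S (of fun i (_ : Unit) => -Δ i) (of fun (_ : Unit) j => -Δ j) 1

variable {S : Matrix n n ℝ} (Δ : n → ℝ)

theorem det_borderedMatrix (hS : IsUnit S.det) :
    (borderedMatrix S Δ).det = S.det * (1 - Δ ⬝ᵥ S⁻¹ *ᵥ Δ) := by
  have := S.invertibleOfIsUnitDet hS
  rw [borderedMatrix, det_fromBlocks₁₁, invOf_eq_nonsing_inv]
  congr 1
  rw [det_unique]
  simp only [PUnit.default_eq_unit, Matrix.sub_apply, one_apply_eq, Matrix.mul_apply, of_apply,
    neg_mul, Finset.sum_neg_distrib, mul_neg, Finset.sum_mul, neg_neg, dotProduct, mulVec,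
    Finset.mul_sum, sub_right_inj]
  rw [Finset.sum_comm]
  simp [mul_comm, mul_left_comm]

theorem borderedMatrix_mulVec_sumElim (hS : IsUnit S.det) (u : n → ℝ) (c : ℝ) :
    borderedMatrix S Δ *ᵥ Sum.elim (S⁻¹ *ᵥ u + c • S⁻¹ *ᵥ Δ) (fun _ => c) =
      Sum.elim u (fun _ => c * (1 - Δ ⬝ᵥ S⁻¹ *ᵥ Δ) - Δ ⬝ᵥ S⁻¹ *ᵥ u) := by
  rw [borderedMatrix, fromBlocks_mulVec]
  ext (i | _)
  · simp only [Sum.elim_comp_inl, Sum.elim_comp_inr, Sum.elim_inl, mulVec_add, mulVec_smul,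
      mulVec_mulVec, mul_nonsing_inv _ hS, one_mulVec, Pi.add_apply, Pi.smul_apply, smul_eq_mul,
      mulVec, dotProduct, Finset.univ_unique, PUnit.default_eq_unit, of_apply, neg_mul,
      Finset.sum_neg_distrib, Finset.sum_const, Finset.card_singleton, one_smul]
    ring
  · have : (fun j => -Δ j) = -Δ := rfl
    simp only [Sum.elim_comp_inl, Sum.elim_comp_inr, one_mulVec, Sum.elim_inr, Pi.add_apply,
      mulVec, of_apply, this, dotProduct_add, neg_dotProduct, dotProduct_smul, smul_eq_mul,
      mul_neg]
    ring

theorem borderedMatrix_inv_mulVec_sumElim (hS : IsUnit S.det) (hk : 1 - Δ ⬝ᵥ S⁻¹ *ᵥ Δ ≠ 0)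
    (u : n → ℝ) (s : ℝ) :
    (borderedMatrix S Δ)⁻¹ *ᵥ Sum.elim u (fun _ => s) =
      Sum.elim (S⁻¹ *ᵥ u + ((Δ ⬝ᵥ S⁻¹ *ᵥ u + s) / (1 - Δ ⬝ᵥ S⁻¹ *ᵥ Δ)) • S⁻¹ *ᵥ Δ)
        (fun _ => (Δ ⬝ᵥ S⁻¹ *ᵥ u + s) / (1 - Δ ⬝ᵥ S⁻¹ *ᵥ Δ)) := by
  have hΩ : IsUnit (borderedMatrix S Δ).det := by
    rw [det_borderedMatrix Δ hS]
    exact hS.mul hk.isUnit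
  have h := borderedMatrix_mulVec_sumElim Δ hS u ((Δ ⬝ᵥ S⁻¹ *ᵥ u + s) / (1 - Δ ⬝ᵥ S⁻¹ *ᵥ Δ))
  rw [div_mul_cancel₀ _ hk, add_sub_cancel_left] at h
  rw [← h, mulVec_mulVec, nonsing_inv_mul _ hΩ, one_mulVec]

theorem sumElim_dotProduct_borderedMatrix_inv_mulVec (hSt : S.IsSymm) (hS : IsUnit S.det)
    (hk : 1 - Δ ⬝ᵥ S⁻¹ *ᵥ Δ ≠ 0) (u : n → ℝ) (s : ℝ) :
    Sum.elim u (fun _ => s) ⬝ᵥ (borderedMatrix S Δ)⁻¹ *ᵥ Sum.elim u (fun _ => s) =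
      u ⬝ᵥ S⁻¹ *ᵥ u + (Δ ⬝ᵥ S⁻¹ *ᵥ u + s) ^ 2 / (1 - Δ ⬝ᵥ S⁻¹ *ᵥ Δ) := by
  have hsymm : u ⬝ᵥ S⁻¹ *ᵥ Δ = Δ ⬝ᵥ S⁻¹ *ᵥ u := by
    rw [dotProduct_mulVec, ← mulVec_transpose, hSt.inv.eq, dotProduct_comm]
  rw [borderedMatrix_inv_mulVec_sumElim Δ hS hk, sumElim_dotProduct_sumElim, dotProduct_add,
    dotProduct_smul, smul_eq_mul, hsymm]
  simp only [dotProduct, Finset.univ_unique, Finset.sum_singleton]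
  field_simp
  ring

theorem mvnPDF_borderedMatrix (hSt : S.IsSymm) (hS : 0 < S.det) (hk : 0 < 1 - Δ ⬝ᵥ S⁻¹ *ᵥ Δ)
    (μ x : n → ℝ) (s : ℝ) :
    mvnPDF (Sum.elim μ fun _ => 0) (borderedMatrix S Δ) (Sum.elim x fun _ => s) =
      mvnPDF μ S x * normPDF (-(Δ ⬝ᵥ S⁻¹ *ᵥ (x - μ))) (1 - Δ ⬝ᵥ S⁻¹ *ᵥ Δ) s := by
  have h2π : (0 : ℝ) < 2 * π := by positivity
  have hsub : (Sum.elim x fun _ : Unit => s) - Sum.elim μ (fun _ => 0) =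
      Sum.elim (x - μ) (fun _ => s) := by
    ext (i | _) <;> simp
  rw [mvnPDF, mvnPDF, normPDF, hsub,
    sumElim_dotProduct_borderedMatrix_inv_mulVec Δ hSt hS.ne'.isUnit hk.ne',
    det_borderedMatrix Δ hS.ne'.isUnit, Real.mul_rpow hS.le hk.le, Fintype.card_sum,
    Fintype.card_unit, Nat.cast_add, Nat.cast_one, neg_add, add_div, Real.rpow_add h2π,
    Real.sqrt_mul h2π.le, Real.sqrt_eq_rpow, Real.sqrt_eq_rpow, mul_inv,
    ← Real.rpow_neg h2π.le, ← Real.rpow_neg hk.le, neg_add, add_div, Real.exp_add]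
  generalize 1 - Δ ⬝ᵥ S⁻¹ *ᵥ Δ = k
  ring_nf

theorem lintegral_Iic_mvnPDF_borderedMatrix (hSt : S.IsSymm) (hS : 0 < S.det)
    (hk : 0 < 1 - Δ ⬝ᵥ S⁻¹ *ᵥ Δ) (μ x : n → ℝ) (t : ℝ) :
    ∫⁻ s in Set.Iic t, ENNReal.ofReal
        (mvnPDF (Sum.elim μ fun _ => 0) (borderedMatrix S Δ) (Sum.elim x fun _ => s)) =
      ENNReal.ofReal
        (mvnPDF μ S x * stdCDF ((t + Δ ⬝ᵥ S⁻¹ *ᵥ (x - μ)) / √(1 - Δ ⬝ᵥ S⁻¹ *ᵥ Δ))) := by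
  simp_rw [mvnPDF_borderedMatrix Δ hSt hS hk, ENNReal.ofReal_mul (mvnPDF_nonneg hS.le x)]
  rw [lintegral_const_mul _ (by unfold normPDF; fun_prop), lintegral_Iic_normPDF _ hk,
    sub_neg_eq_add]

theorem setIntegral_Iic_mvnPDF_borderedMatrix (hSt : S.IsSymm) (hS : 0 < S.det)
    (hk : 0 < 1 - Δ ⬝ᵥ S⁻¹ *ᵥ Δ) (μ y : n → ℝ) (t : ℝ) :
    ∫ z in Set.Iic (Sum.elim y fun _ => t),
        mvnPDF (Sum.elim μ fun _ => 0) (borderedMatrix S Δ) z =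
      ∫ x in Set.Iic y,
        mvnPDF μ S x * stdCDF ((t + Δ ⬝ᵥ S⁻¹ *ᵥ (x - μ)) / √(1 - Δ ⬝ᵥ S⁻¹ *ᵥ Δ)) := by
  have hΩ : 0 ≤ (borderedMatrix S Δ).det := by
    rw [det_borderedMatrix Δ hS.ne'.isUnit]
    positivity
  rw [integral_eq_lintegral_of_nonneg_ae (.of_forall (mvnPDF_nonneg hΩ))
      (continuous_mvnPDF _ _).aestronglyMeasurable,
    integral_eq_lintegral_of_nonneg_ae
      (.of_forall fun x => mul_nonneg (mvnPDF_nonneg hS.le x) (stdCDF_nonneg _))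
      (Measurable.aestronglyMeasurable (by fun_prop)),
    setLIntegral_Iic_sumElim (by fun_prop)]
  congr 1
  refine lintegral_congr fun x => ?_
  have hx : Continuous fun w : Unit → ℝ => (Sum.elim x w : n ⊕ Unit → ℝ) :=
    continuous_pi fun j => j.rec (fun _ => continuous_const) continuous_apply
  rw [setLIntegral_Iic_const_unit (by fun_prop), lintegral_Iic_mvnPDF_borderedMatrix Δ hSt hS hk]

end Bordered

section ESN

variable {n : Type*} [Fintype n] [DecidableEq n] {S : Matrix n n ℝ} (hS : S.PosDef) (l : n → ℝ)

noncomputable def esnDelta : n → ℝ :=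
  (√(1 + l ⬝ᵥ l))⁻¹ • (posSemidefSqrt hS.posSemidef *ᵥ l)

theorem isUnit_det_posSemidefSqrt : IsUnit (posSemidefSqrt hS.posSemidef).det := by
  refine isUnit_of_mul_isUnit_left (y := (posSemidefSqrt hS.posSemidef).det) ?_
  rw [← det_mul, posSemidefSqrt_mul_self]
  exact hS.det_pos.ne'.isUnit

theorem esnDelta_dotProduct_inv_mulVec (u : n → ℝ) :
    esnDelta hS l ⬝ᵥ S⁻¹ *ᵥ u =
      (√(1 + l ⬝ᵥ l))⁻¹ * (l ⬝ᵥ (posSemidefSqrt hS.posSemidef)⁻¹ *ᵥ u) := by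
  rw [esnDelta, smul_dotProduct, smul_eq_mul, ← mulVec_dotProduct_inv_mul_self_mulVec
    (transpose_posSemidefSqrt _) (isUnit_det_posSemidefSqrt hS), posSemidefSqrt_mul_self]

theorem one_sub_esnDelta_dotProduct_inv_mulVec :
    1 - esnDelta hS l ⬝ᵥ S⁻¹ *ᵥ esnDelta hS l = (1 + l ⬝ᵥ l)⁻¹ := by
  have hll := one_add_dotProduct_self_pos l
  rw [esnDelta_dotProduct_inv_mulVec, esnDelta, mulVec_smul, mulVec_mulVec,
    nonsing_inv_mul _ (isUnit_det_posSemidefSqrt hS), one_mulVec, dotProduct_smul, smul_eq_mul,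
    ← mul_assoc, ← mul_inv, Real.mul_self_sqrt hll.le]
  field_simp
  ring

end ESN

theorem esn_cdf_general {p : ℕ} (μ : Fin p → ℝ) (S : Matrix (Fin p) (Fin p) ℝ)
    (hS : S.PosDef) (l : Fin p → ℝ) (τ : ℝ)
    {α : Type*} [MeasurableSpace α] (P : Measure α)
    (Y : α → Fin p → ℝ)
    (hY : ∀ A : Set (Fin p → ℝ), MeasurableSet A →
      (P (Y ⁻¹' A)).toReal = ∫ x in A, esnPDF μ S hS l τ x)
    (Δ : Fin p → ℝ)
    (hΔ : Δ = (Real.sqrt (1 + dotProduct l l))⁻¹ • (posSemidefSqrt hS.posSemidef *ᵥ l))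
    (Ωmat : Matrix (Fin p ⊕ Unit) (Fin p ⊕ Unit) ℝ)
    (hΩ : Ωmat = Matrix.fromBlocks S (Matrix.of fun i (_ : Unit) => -Δ i)
      (Matrix.of fun (_ : Unit) j => -Δ j) 1)
    (y : Fin p → ℝ) :
    (P {ω | ∀ i, Y ω i ≤ y i}).toReal =
      (stdCDF (τ / Real.sqrt (1 + dotProduct l l)))⁻¹ *
        ∫ x in {x : (Fin p ⊕ Unit) → ℝ |
            ∀ j, x j ≤ Sum.elim y (fun _ => τ / Real.sqrt (1 + dotProduct l l)) j},
          mvnPDF (Sum.elim μ (fun _ => (0 : ℝ))) Ωmat x := by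
  obtain rfl : Δ = esnDelta hS l := hΔ
  obtain rfl : Ωmat = borderedMatrix S (esnDelta hS l) := hΩ
  have hk := one_sub_esnDelta_dotProduct_inv_mulVec hS l
  have hc : √(1 + l ⬝ᵥ l) ≠ 0 := (Real.sqrt_pos.2 (one_add_dotProduct_self_pos l)).ne'
  calc (P (Y ⁻¹' Set.Iic y)).toReal
      = ∫ x in Set.Iic y, esnPDF μ S hS l τ x := hY _ measurableSet_Iic
    _ = (stdCDF (τ / √(1 + l ⬝ᵥ l)))⁻¹ * ∫ x in Set.Iic y, mvnPDF μ S x *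
          stdCDF (τ + l ⬝ᵥ (posSemidefSqrt hS.posSemidef)⁻¹ *ᵥ (x - μ)) := by
      simp only [esnPDF, mul_assoc]
      exact integral_const_mul _ _
    _ = (stdCDF (τ / √(1 + l ⬝ᵥ l)))⁻¹ * ∫ z in Set.Iic (Sum.elim y fun _ => τ / √(1 + l ⬝ᵥ l)),
          mvnPDF (Sum.elim μ fun _ => 0) (borderedMatrix S (esnDelta hS l)) z := by
      rw [setIntegral_Iic_mvnPDF_borderedMatrix _ (isHermitian_iff_isSymm.1 hS.1) hS.det_pos
        (hk ▸ inv_pos.2 (one_add_dotProduct_self_pos l)), hk]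
      congr 1
      refine setIntegral_congr_fun measurableSet_Iic fun x _ => ?_
      rw [esnDelta_dotProduct_inv_mulVec, Real.sqrt_inv, div_inv_eq_mul, add_mul,
        div_mul_cancel₀ _ hc, mul_right_comm, inv_mul_cancel₀ hc, one_mul]

/-- cdf of the ESN distribution: if `Y ∼ ESN_p(μ, Σ, λ, τ)` then
`P(Y ≤ y) = ξ⁻¹ Φ_{p+1}((yᵀ, τ̃)ᵀ; μ*, Ω)`. -/
theorem esn_cdf {p : ℕ} (μ : Fin p → ℝ) (S : Matrix (Fin p) (Fin p) ℝ)
    (hS : S.PosDef) (l : Fin p → ℝ) (τ : ℝ)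
    {α : Type*} [MeasurableSpace α] (P : Measure α) [IsProbabilityMeasure P]
    (Y : α → Fin p → ℝ) (hYmeas : Measurable Y)
    (hY : ∀ A : Set (Fin p → ℝ), MeasurableSet A →
      (P (Y ⁻¹' A)).toReal = ∫ x in A, esnPDF μ S hS l τ x)
    (Δ : Fin p → ℝ)
    (hΔ : Δ = (Real.sqrt (1 + dotProduct l l))⁻¹ • (posSemidefSqrt hS.posSemidef *ᵥ l))
    (Ωmat : Matrix (Fin p ⊕ Unit) (Fin p ⊕ Unit) ℝ)
    (hΩ : Ωmat = Matrix.fromBlocks S (Matrix.of fun i (_ : Unit) => -Δ i)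
      (Matrix.of fun (_ : Unit) j => -Δ j) 1)
    (y : Fin p → ℝ) :
    (P {ω | ∀ i, Y ω i ≤ y i}).toReal =
      (stdCDF (τ / Real.sqrt (1 + dotProduct l l)))⁻¹ *
        ∫ x in {x : (Fin p ⊕ Unit) → ℝ |
            ∀ j, x j ≤ Sum.elim y (fun _ => τ / Real.sqrt (1 + dotProduct l l)) j},
          mvnPDF (Sum.elim μ (fun _ => (0 : ℝ))) Ωmat x :=
  esn_cdf_general μ S hS l τ P Y hY Δ hΔ Ωmat hΩ y
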